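/- arXiv:2408.00888 — 3 statements merged into one kernel-verified Lean document; each statement's English description precedes it below -/
import Mathlib

section
/- Let l : ℝ^d → ℝ be measurable with ∫ exp(-l(x)) φ((x-θ)/√γ) dx finite and positive for all θ ∈ ℝ^d, where φ is the standard Gaussian density, and define h_γ(θ) := -log ∫ exp(-l(x)) γ^{-d/2} φ((x-θ)/√γ) dx. Assuming h_γ is differentiable, for all θ, θ' ∈ ℝ^d it holds that h_γ(θ') ≤ h_γ(θ) + ⟨∇h_γ(θ), θ' - θ⟩ + ‖θ' - θ‖²/(2γ). -/
open MeasureTheory RealInnerProductSpace Real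

/-- Standard `d`-dimensional Gaussian density. -/
noncomputable def stdGauss (d : ℕ) (z : EuclideanSpace ℝ (Fin d)) : ℝ :=
  (2 * π) ^ (-(d : ℝ) / 2) * Real.exp (-‖z‖ ^ 2 / 2)

/-- Gaussian-smoothed Laplace functional `h_γ`. -/
noncomputable def laplaceFunc {d : ℕ} (l : EuclideanSpace ℝ (Fin d) → ℝ) (γ : ℝ)
    (θ : EuclideanSpace ℝ (Fin d)) : ℝ :=
  -Real.log (∫ x, Real.exp (-l x) * γ ^ (-(d : ℝ) / 2) *
      stdGauss d ((Real.sqrt γ)⁻¹ • (x - θ)))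

/-- Hölder's inequality in log-linear form: the partition function is log-convex. -/
lemma aux_holder {α : Type*} [MeasurableSpace α] (μ : Measure α) (A B : α → ℝ)
    (hA : Measurable A) (hB : Measurable B)
    (hIA : Integrable (fun x => Real.exp (A x)) μ)
    (hIB : Integrable (fun x => Real.exp (B x)) μ)
    {a b : ℝ} (ha : 0 < a) (hb : 0 < b) (hab : a + b = 1) :
    ∫ x, Real.exp (a * A x + b * B x) ∂μ ≤
      (∫ x, Real.exp (A x) ∂μ) ^ a * (∫ x, Real.exp (B x) ∂μ) ^ b := by
  have e : Real.HolderConjugate (1 / a) (1 / b) := Real.holderConjugate_one_div ha hb hab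
  set f : α → ℝ := fun x => Real.exp (a * A x) with hf
  set g : α → ℝ := fun x => Real.exp (b * B x) with hg
  have posf : 0 ≤ᵐ[μ] f := ae_of_all _ fun x => (Real.exp_pos _).le
  have posg : 0 ≤ᵐ[μ] g := ae_of_all _ fun x => (Real.exp_pos _).le
  have memLp : ∀ (c : ℝ) (C : α → ℝ), 0 < c → Measurable C →
      Integrable (fun x => Real.exp (C x)) μ →
      MemLp (fun x => Real.exp (c * C x)) (ENNReal.ofReal (1 / c)) μ := by
    intro c C hc hCm hCi
    have A1 : ENNReal.ofReal (1 / c) ≠ 0 := by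
      rw [Ne, ENNReal.ofReal_eq_zero, not_le]
      positivity
    have B1 : ENNReal.ofReal (1 / c) ≠ ⊤ := ENNReal.ofReal_ne_top
    have hm : AEStronglyMeasurable (fun x => Real.exp (c * C x)) μ :=
      ((hCm.const_mul c).exp).aestronglyMeasurable
    rw [← memLp_norm_rpow_iff hm A1 B1, ENNReal.toReal_ofReal (by positivity),
      ENNReal.div_self A1 B1, memLp_one_iff_integrable]
    apply hCi.congr
    refine ae_of_all _ fun x => ?_
    show Real.exp (C x) = ‖Real.exp (c * C x)‖ ^ (1 / c)
    rw [Real.norm_of_nonneg (Real.exp_pos _).le, ← Real.exp_mul]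
    congr 1
    field_simp
  have h := MeasureTheory.integral_mul_le_Lp_mul_Lq_of_nonneg e posf posg
    (memLp a A ha hA hIA) (memLp b B hb hB hIB)
  have h1 : ∫ x, Real.exp (a * A x + b * B x) ∂μ = ∫ x, f x * g x ∂μ := by
    refine integral_congr_ae (ae_of_all _ fun x => ?_)
    rw [hf, hg]
    dsimp only
    rw [← Real.exp_add]
  have h2 : ∫ x, f x ^ (1 / a) ∂μ = ∫ x, Real.exp (A x) ∂μ := by
    refine integral_congr_ae (ae_of_all _ fun x => ?_)
    rw [hf]
    dsimp only
    rw [← Real.exp_mul]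
    congr 1
    field_simp
  have h3 : ∫ x, g x ^ (1 / b) ∂μ = ∫ x, Real.exp (B x) ∂μ := by
    refine integral_congr_ae (ae_of_all _ fun x => ?_)
    rw [hg]
    dsimp only
    rw [← Real.exp_mul]
    congr 1
    field_simp
  rw [h1]
  refine h.trans_eq ?_
  rw [h2, h3, one_div_one_div, one_div_one_div]

theorem stmt13 {d : ℕ} (l : EuclideanSpace ℝ (Fin d) → ℝ) (γ : ℝ) (hγ : 0 < γ)
    (hmeas : Measurable l)
    (hint : ∀ θ : EuclideanSpace ℝ (Fin d),
      Integrable (fun x => Real.exp (-l x) * γ ^ (-(d : ℝ) / 2) *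
        stdGauss d ((Real.sqrt γ)⁻¹ • (x - θ))))
    (hpos : ∀ θ : EuclideanSpace ℝ (Fin d),
      0 < ∫ x, Real.exp (-l x) * γ ^ (-(d : ℝ) / 2) *
        stdGauss d ((Real.sqrt γ)⁻¹ • (x - θ)))
    (hdiff : Differentiable ℝ (laplaceFunc l γ)) :
    ∀ θ θ' : EuclideanSpace ℝ (Fin d),
      laplaceFunc l γ θ' ≤ laplaceFunc l γ θ +
        ⟪gradient (laplaceFunc l γ) θ, θ' - θ⟫ + ‖θ' - θ‖ ^ 2 / (2 * γ) := by
  have hγ' : γ ≠ 0 := hγ.ne'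
  set C : ℝ := γ ^ (-(d : ℝ) / 2) * (2 * π) ^ (-(d : ℝ) / 2) with hCdef
  have hπ : (0:ℝ) < π := Real.pi_pos
  have hC : 0 < C := by positivity
  set G : EuclideanSpace ℝ (Fin d) → ℝ := fun x => -l x - ‖x‖ ^ 2 / (2 * γ) with hGdef
  set F : EuclideanSpace ℝ (Fin d) → EuclideanSpace ℝ (Fin d) → ℝ :=
    fun s x => Real.exp (G x + ⟪x, s⟫ / γ) with hFdef
  -- pointwise rewriting of the integrand
  have hpt : ∀ s x, Real.exp (-l x) * γ ^ (-(d : ℝ) / 2) *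
      stdGauss d ((Real.sqrt γ)⁻¹ • (x - s))
      = C * (Real.exp (-‖s‖ ^ 2 / (2 * γ)) * F s x) := by
    intro s x
    have hn : ‖(Real.sqrt γ)⁻¹ • (x - s)‖ ^ 2
        = γ⁻¹ * (‖x‖ ^ 2 - 2 * ⟪x, s⟫ + ‖s‖ ^ 2) := by
      rw [norm_smul, mul_pow, norm_inv, Real.norm_of_nonneg (Real.sqrt_nonneg γ),
        inv_pow, Real.sq_sqrt hγ.le, norm_sub_sq_real]
    rw [stdGauss, hn, hFdef, hGdef]
    dsimp only
    have he : Real.exp (-l x) * Real.exp (-(γ⁻¹ * (‖x‖ ^ 2 - 2 * ⟪x, s⟫ + ‖s‖ ^ 2)) / 2)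
        = Real.exp (-‖s‖ ^ 2 / (2 * γ)) *
          Real.exp ((-l x - ‖x‖ ^ 2 / (2 * γ)) + ⟪x, s⟫ / γ) := by
      rw [← Real.exp_add, ← Real.exp_add]
      congr 1
      field_simp
      ring
    linear_combination (γ ^ (-(d : ℝ) / 2) * (2 * π) ^ (-(d : ℝ) / 2)) * he
  have hIntEq : ∀ s, (∫ x, Real.exp (-l x) * γ ^ (-(d : ℝ) / 2) *
      stdGauss d ((Real.sqrt γ)⁻¹ • (x - s)))
      = C * (Real.exp (-‖s‖ ^ 2 / (2 * γ)) * ∫ x, F s x) := by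
    intro s
    simp_rw [hpt s, ← mul_assoc]
    rw [MeasureTheory.integral_const_mul, mul_assoc]
  -- integrability and positivity of the reduced integrand
  have hIF : ∀ s, Integrable (F s) := by
    intro s
    have h1 := (hint s).const_mul (C * Real.exp (-‖s‖ ^ 2 / (2 * γ)))⁻¹
    refine h1.congr (ae_of_all _ fun x => ?_)
    show (C * Real.exp (-‖s‖ ^ 2 / (2 * γ)))⁻¹ * _ = F s x
    rw [hpt s x]
    field_simp
  have hMpos : ∀ s, 0 < ∫ x, F s x := by
    intro s
    have h2 := hpos s
    rw [hIntEq s] at h2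
    have h3 : 0 < C * Real.exp (-‖s‖ ^ 2 / (2 * γ)) := by positivity
    nlinarith [h2, h3]
  -- formula for the Laplace functional
  have hLap : ∀ s, laplaceFunc l γ s
      = ‖s‖ ^ 2 / (2 * γ) - Real.log (∫ x, F s x) - Real.log C := by
    intro s
    rw [laplaceFunc, hIntEq s,
      Real.log_mul hC.ne' (mul_pos (Real.exp_pos _) (hMpos s)).ne',
      Real.log_mul (Real.exp_pos _).ne' (hMpos s).ne', Real.log_exp]
    ring
  -- measurability
  have hGm : Measurable G :=
    (hmeas.neg).sub ((measurable_norm.pow_const 2).div_const (2 * γ))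
  have hAm : ∀ s, Measurable (fun x => G x + ⟪x, s⟫ / γ) := fun s =>
    hGm.add (((continuous_id.inner continuous_const).measurable).div_const γ)
  -- the key convexity estimate via Hölder
  have hconv : ∀ (a b : ℝ) (θ₁ θ₂ : EuclideanSpace ℝ (Fin d)), 0 < a → 0 < b → a + b = 1 →
      a * laplaceFunc l γ θ₁ + b * laplaceFunc l γ θ₂ - a * b * ‖θ₁ - θ₂‖ ^ 2 / (2 * γ)
        ≤ laplaceFunc l γ (a • θ₁ + b • θ₂) := by
    intro a b θ₁ θ₂ ha hb hab
    obtain rfl : b = 1 - a := by linarith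
    have hhold := aux_holder volume (fun x => G x + ⟪x, θ₁⟫ / γ) (fun x => G x + ⟪x, θ₂⟫ / γ)
      (hAm θ₁) (hAm θ₂) (hIF θ₁) (hIF θ₂) ha hb hab
    have hFe : ∀ x, F (a • θ₁ + (1 - a) • θ₂) x
        = Real.exp (a * (G x + ⟪x, θ₁⟫ / γ) + (1 - a) * (G x + ⟪x, θ₂⟫ / γ)) := by
      intro x
      rw [hFdef]
      dsimp only
      congr 1
      rw [inner_add_right, real_inner_smul_right, real_inner_smul_right]
      field_simp
      ring
    have hM1 := hMpos θ₁
    have hM2 := hMpos θ₂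
    have hHold2 : ∫ x, F (a • θ₁ + (1 - a) • θ₂) x
        ≤ (∫ x, F θ₁ x) ^ a * (∫ x, F θ₂ x) ^ (1 - a) := by
      calc ∫ x, F (a • θ₁ + (1 - a) • θ₂) x
          = ∫ x, Real.exp (a * (G x + ⟪x, θ₁⟫ / γ) + (1 - a) * (G x + ⟪x, θ₂⟫ / γ)) := by
            simp_rw [hFe]
        _ ≤ _ := hhold
    have hlog : Real.log (∫ x, F (a • θ₁ + (1 - a) • θ₂) x)
        ≤ a * Real.log (∫ x, F θ₁ x) + (1 - a) * Real.log (∫ x, F θ₂ x) := by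
      rw [← Real.log_rpow hM1, ← Real.log_rpow hM2,
        ← Real.log_mul (by positivity) (by positivity)]
      exact Real.log_le_log (hMpos _) hHold2
    have hNI : ‖a • θ₁ + (1 - a) • θ₂‖ ^ 2
        = a * ‖θ₁‖ ^ 2 + (1 - a) * ‖θ₂‖ ^ 2 - a * (1 - a) * ‖θ₁ - θ₂‖ ^ 2 := by
      have e1 := norm_add_sq_real (a • θ₁) ((1 - a) • θ₂)
      have e2 := norm_sub_sq_real θ₁ θ₂
      rw [norm_smul, norm_smul, real_inner_smul_left, real_inner_smul_right,
        Real.norm_of_nonneg ha.le, Real.norm_of_nonneg hb.le, mul_pow, mul_pow] at e1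
      linear_combination e1 + (a * (1 - a)) * e2
    rw [hLap θ₁, hLap θ₂, hLap (a • θ₁ + (1 - a) • θ₂)]
    have step2 : a * (‖θ₁‖ ^ 2 / (2 * γ) - Real.log (∫ x, F θ₁ x) - Real.log C)
        + (1 - a) * (‖θ₂‖ ^ 2 / (2 * γ) - Real.log (∫ x, F θ₂ x) - Real.log C)
        - a * (1 - a) * ‖θ₁ - θ₂‖ ^ 2 / (2 * γ)
        = ‖a • θ₁ + (1 - a) • θ₂‖ ^ 2 / (2 * γ)
          - (a * Real.log (∫ x, F θ₁ x) + (1 - a) * Real.log (∫ x, F θ₂ x)) - Real.log C := by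
      rw [hNI]
      field_simp
      ring
    rw [step2]
    linarith [hlog]
  -- conclude via the limit of difference quotients
  intro θ θ'
  set u : EuclideanSpace ℝ (Fin d) := θ' - θ with hu
  set h := laplaceFunc l γ with hhdef
  have hline : HasDerivAt (fun t : ℝ => θ + t • u) u 0 := by
    simpa using ((hasDerivAt_id (0 : ℝ)).smul_const u).const_add θ
  have hFd : HasFDerivAt h (fderiv ℝ h θ) (θ + (0 : ℝ) • u) := by
    simpa using (hdiff θ).hasFDerivAt
  have hD : HasDerivAt (fun t : ℝ => h (θ + t • u)) (fderiv ℝ h θ u) 0 :=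
    by have := hFd.comp_hasDerivAt (x := 0) hline; exact this
  have hgrad : ⟪gradient h θ, u⟫ = fderiv ℝ h θ u :=
    InnerProductSpace.toDual_symm_apply
  have hT1 : Filter.Tendsto (fun t : ℝ => (h (θ + t • u) - h θ) / t)
      (nhdsWithin 0 (Set.Ioi 0)) (nhds (fderiv ℝ h θ u)) := by
    have h1 := hasDerivAt_iff_tendsto_slope.mp hD
    have h2 := h1.mono_left (nhdsWithin_mono 0 (fun x hx => Set.mem_compl_singleton_iff.mpr (ne_of_gt hx)))
    refine h2.congr fun t => ?_
    rw [slope_def_field]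
    simp
  have hT2 : Filter.Tendsto (fun t : ℝ => (1 - t) * (‖u‖ ^ 2 / (2 * γ)))
      (nhdsWithin 0 (Set.Ioi 0)) (nhds (‖u‖ ^ 2 / (2 * γ))) := by
    have hc : Continuous fun t : ℝ => (1 - t) * (‖u‖ ^ 2 / (2 * γ)) :=
      (continuous_const.sub continuous_id).mul continuous_const
    have h5 : Filter.Tendsto (fun t : ℝ => (1 - t) * (‖u‖ ^ 2 / (2 * γ)))
        (nhdsWithin 0 (Set.Ioi 0)) (nhds ((1 - 0) * (‖u‖ ^ 2 / (2 * γ)))) :=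
      (hc.tendsto 0).mono_left nhdsWithin_le_nhds
    simpa using h5
  have hT : Filter.Tendsto
      (fun t : ℝ => h θ + (h (θ + t • u) - h θ) / t + (1 - t) * (‖u‖ ^ 2 / (2 * γ)))
      (nhdsWithin 0 (Set.Ioi 0))
      (nhds (h θ + fderiv ℝ h θ u + ‖u‖ ^ 2 / (2 * γ))) :=
    (Filter.Tendsto.add tendsto_const_nhds hT1).add hT2
  have hkey : ∀ t ∈ Set.Ioo (0 : ℝ) 1,
      h θ' ≤ h θ + (h (θ + t • u) - h θ) / t + (1 - t) * (‖u‖ ^ 2 / (2 * γ)) := by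
    intro t ht
    have hcmb : θ + t • u = (1 - t) • θ + t • θ' := by
      rw [hu]
      module
    have h3 := hconv (1 - t) t θ θ' (by linarith [ht.2]) ht.1 (by ring)
    rw [← hcmb] at h3
    have hnorm : ‖θ - θ'‖ = ‖u‖ := by rw [hu, norm_sub_rev]
    rw [hnorm] at h3
    have ht0 : t ≠ 0 := ht.1.ne'
    rw [← mul_le_mul_iff_right₀ ht.1]
    have expand : t * (h θ + (h (θ + t • u) - h θ) / t + (1 - t) * (‖u‖ ^ 2 / (2 * γ)))
        = t * h θ + (h (θ + t • u) - h θ) + t * (1 - t) * (‖u‖ ^ 2 / (2 * γ)) := by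
      field_simp
    rw [expand]
    have hc : (1 - t) * t * ‖u‖ ^ 2 / (2 * γ) = t * (1 - t) * (‖u‖ ^ 2 / (2 * γ)) := by ring
    linarith [h3, hc]
  have hfin : h θ' ≤ h θ + fderiv ℝ h θ u + ‖u‖ ^ 2 / (2 * γ) := by
    refine ge_of_tendsto hT ?_
    filter_upwards [Ioo_mem_nhdsGT_of_mem (Set.left_mem_Ico.mpr one_pos)] with t ht
    exact hkey t ht
  calc laplaceFunc l γ θ' = h θ' := rfl
    _ ≤ h θ + fderiv ℝ h θ u + ‖u‖ ^ 2 / (2 * γ) := hfin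
    _ = laplaceFunc l γ θ + ⟪gradient (laplaceFunc l γ) θ, θ' - θ⟫ + ‖θ' - θ‖ ^ 2 / (2 * γ) := by
        rw [← hgrad, hu]
end

section
/- Let l : ℝ² → ℝ be defined by l(x) = min{1, |x₁|} if x₁ = x₂ and l(x) = 1 if x₁ ≠ x₂. Then for every θ ∈ ℝ² and every γ > 0, the Gaussian-smoothed Laplace functional h_γ(θ) := -log ∫ exp(-l(x)) (2πγ)^{-1} exp(-‖x-θ‖²/(2γ)) dx equals 1, even though inf l = 0 is attained at the origin. -/
open MeasureTheory Real

/-- The diagonal in `ℝ²` as a submodule. -/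
def diagSub : Submodule ℝ (EuclideanSpace ℝ (Fin 2)) where
  carrier := {x | x 0 = x 1}
  add_mem' := by intro a b ha hb; simp_all [Set.mem_setOf_eq, PiLp.add_apply]
  zero_mem' := by simp
  smul_mem' := by intro c a ha; simp_all [Set.mem_setOf_eq, PiLp.smul_apply]

lemma diagSub_ne_top : diagSub ≠ ⊤ := by
  intro h
  have : (EuclideanSpace.single 0 (1:ℝ)) ∈ diagSub := h ▸ Submodule.mem_top
  exact absurd (show (EuclideanSpace.single 0 (1:ℝ)) 0 = (EuclideanSpace.single 0 (1:ℝ)) 1 from this)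
    (by simp [EuclideanSpace.single_apply])

lemma diag_null : volume {x : EuclideanSpace ℝ (Fin 2) | x 0 = x 1} = 0 := by
  have := Measure.addHaar_submodule (volume : Measure (EuclideanSpace ℝ (Fin 2)))
    diagSub diagSub_ne_top
  exact this

theorem stmt15 :
    let l : EuclideanSpace ℝ (Fin 2) → ℝ :=
      fun x => if x 0 = x 1 then min 1 |x 0| else 1
    (∀ (θ : EuclideanSpace ℝ (Fin 2)) (γ : ℝ), 0 < γ →
      -Real.log (∫ x, Real.exp (-l x) * (2 * π * γ)⁻¹ *
          Real.exp (-‖x - θ‖ ^ 2 / (2 * γ))) = 1) ∧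
    l 0 = 0 ∧ (∀ x, 0 ≤ l x) := by
  intro l
  refine ⟨?_, ?_, ?_⟩
  · intro θ γ hγ
    have hae : ∀ᵐ x : EuclideanSpace ℝ (Fin 2),
        Real.exp (-l x) * (2 * π * γ)⁻¹ * Real.exp (-‖x - θ‖ ^ 2 / (2 * γ)) =
        Real.exp (-1) * (2 * π * γ)⁻¹ * Real.exp (-‖x - θ‖ ^ 2 / (2 * γ)) := by
      have h0 : ∀ᵐ x : EuclideanSpace ℝ (Fin 2), ¬ (x 0 = x 1) :=
        (ae_iff).2 (by simpa using diag_null)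
      filter_upwards [h0] with x hx
      simp only [l, if_neg hx]
    rw [integral_congr_ae hae]
    have hb : (0:ℝ) < (2*γ)⁻¹ := by positivity
    have hint : (∫ x : EuclideanSpace ℝ (Fin 2),
        Real.exp (-‖x - θ‖ ^ 2 / (2 * γ))) = 2 * π * γ := by
      rw [show (fun x : EuclideanSpace ℝ (Fin 2) => Real.exp (-‖x - θ‖ ^ 2 / (2 * γ)))
          = (fun x => Real.exp (-(2*γ)⁻¹ * ‖x - θ‖^2)) by
        funext x; ring_nf]
      rw [integral_sub_right_eq_self (fun x : EuclideanSpace ℝ (Fin 2) =>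
        Real.exp (-(2*γ)⁻¹ * ‖x‖^2)) θ]
      rw [GaussianFourier.integral_rexp_neg_mul_sq_norm hb]
      rw [finrank_euclideanSpace_fin]
      rw [show ((2:ℕ)/2 : ℝ) = 1 by norm_num, Real.rpow_one]
      field_simp
    have hm : ∀ x : EuclideanSpace ℝ (Fin 2),
        Real.exp (-1) * (2 * π * γ)⁻¹ * Real.exp (-‖x - θ‖ ^ 2 / (2 * γ)) =
        (Real.exp (-1) * (2 * π * γ)⁻¹) * Real.exp (-‖x - θ‖ ^ 2 / (2 * γ)) :=
      fun x => rfl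
    rw [funext hm] at *
    rw [integral_const_mul, hint]
    have hpos : (2 * π * γ) ≠ 0 := by positivity
    rw [mul_assoc, inv_mul_cancel₀ hpos, mul_one, Real.log_exp]
    ring
  · simp [l]
  · intro x
    simp only [l]
    split
    · exact le_min zero_le_one (abs_nonneg _)
    · exact zero_le_one
end

section
/- Let fₙ : ℝ^d → ℝ be differentiable functions and γₙ > 0 stepsizes, and consider the recursion θ_{n+1} = θₙ - γₙ ∇fₙ(θₙ). Assume: (i) inf_{n,θ} fₙ(θ) > -∞; (ii) there exist Lₙ > 0 with limsupₙ γₙ Lₙ < 1 such that fₙ(θ') ≤ fₙ(θ) + ⟨∇fₙ(θ), θ'-θ⟩ + Lₙ‖θ'-θ‖² for all θ, θ', n; (iii) there exist δₙ ≥ 0 with δₙ/γₙ → 0 and δₙ/γ_{n+1} → 0 such that f_{n+1}(θ) - fₙ(θ) ≤ δₙ for all θ and n; and (iv) Σₙ γₙ = ∞. Then liminfₙ ‖∇fₙ(θₙ)‖ = 0; equivalently, there exists a subsequence θ_{n_k} with ‖∇f_{n_k}(θ_{n_k})‖ → 0. -/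
open Filter Topology RealInnerProductSpace

theorem stmt17 {d : ℕ}
    (f : ℕ → EuclideanSpace ℝ (Fin d) → ℝ)
    (hdiff : ∀ n, Differentiable ℝ (f n))
    (γ L δ : ℕ → ℝ) (hγ : ∀ n, 0 < γ n) (hL : ∀ n, 0 < L n) (hδ : ∀ n, 0 ≤ δ n)
    (θ : ℕ → EuclideanSpace ℝ (Fin d))
    (hrec : ∀ n, θ (n + 1) = θ n - γ n • gradient (f n) (θ n))
    -- (i) uniform lower bound
    (hbd : ∃ m : ℝ, ∀ (n : ℕ) (x : EuclideanSpace ℝ (Fin d)), m ≤ f n x)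
    -- (ii) smoothness with limsup γₙ Lₙ < 1
    (hlimsup : Filter.limsup (fun n => ((γ n * L n : ℝ) : EReal)) atTop < 1)
    (hsmooth : ∀ (n : ℕ) (x y : EuclideanSpace ℝ (Fin d)),
      f n y ≤ f n x + ⟪gradient (f n) x, y - x⟫ + L n * ‖y - x‖ ^ 2)
    -- (iii) time-drift condition (α = 0) with δₙ/γₙ → 0 and δₙ/γₙ₊₁ → 0
    (hratio1 : Tendsto (fun n => δ n / γ n) atTop (nhds 0))
    (hratio2 : Tendsto (fun n => δ n / γ (n + 1)) atTop (nhds 0))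
    (hdrift : ∀ (n : ℕ) (x : EuclideanSpace ℝ (Fin d)), f (n + 1) x - f n x ≤ δ n)
    -- (iv) divergent stepsizes
    (hdiv : Tendsto (fun N => ∑ n ∈ Finset.range N, γ n) atTop atTop) :
    Filter.liminf (fun n => ‖gradient (f n) (θ n)‖) atTop = 0 ∧
      ∃ φ : ℕ → ℕ, StrictMono φ ∧
        Tendsto (fun k => ‖gradient (f (φ k)) (θ (φ k))‖) atTop (nhds 0) := by
  set g : ℕ → EuclideanSpace ℝ (Fin d) := fun n => gradient (f n) (θ n) with hg
  set F : ℕ → ℝ := fun n => f n (θ n) with hF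
  obtain ⟨m, hm⟩ := hbd
  -- Step B: find c < 1 bounding γₙLₙ eventually
  obtain ⟨c', hc'1, hc'2⟩ := exists_between hlimsup
  have hc'bot : c' ≠ ⊥ := fun h => by rw [h] at hc'1; exact not_lt_bot hc'1
  have hc'top : c' ≠ ⊤ := fun h => by rw [h] at hc'2; exact (not_top_lt hc'2)
  set c : ℝ := c'.toReal with hc
  have hcc' : (c : EReal) = c' := EReal.coe_toReal hc'top hc'bot
  have hc1 : c < 1 := by
    have := hc'2
    rw [← hcc'] at this
    exact_mod_cast this
  have hev_c : ∀ᶠ n in atTop, γ n * L n ≤ c := by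
    have : ∀ᶠ n in atTop, ((γ n * L n : ℝ) : EReal) < c' :=
      eventually_lt_of_limsup_lt hc'1
    filter_upwards [this] with n hn
    rw [← hcc'] at hn
    exact le_of_lt (by exact_mod_cast hn)
  -- Step A: descent inequality
  have descent : ∀ n, F (n + 1) ≤ F n - γ n * (1 - γ n * L n) * ‖g n‖ ^ 2 + δ n := by
    intro n
    have h1 := hsmooth n (θ n) (θ (n + 1))
    have hθ : θ (n + 1) - θ n = -(γ n • g n) := by
      rw [hrec n]; abel
    rw [hθ] at h1
    have hinner : ⟪g n, -(γ n • g n)⟫ = -(γ n * ‖g n‖ ^ 2) := by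
      rw [inner_neg_right, real_inner_smul_right, real_inner_self_eq_norm_sq]
    have hnorm : ‖-(γ n • g n)‖ ^ 2 = γ n ^ 2 * ‖g n‖ ^ 2 := by
      rw [norm_neg, norm_smul, mul_pow, Real.norm_eq_abs, sq_abs]
    rw [hinner, hnorm] at h1
    have h2 := hdrift n (θ (n + 1))
    have : F (n + 1) ≤ f n (θ (n + 1)) + δ n := by
      have := hdrift n (θ (n + 1)); simp only [hF]; linarith
    calc F (n + 1) ≤ f n (θ (n + 1)) + δ n := this
      _ ≤ F n + -(γ n * ‖g n‖ ^ 2) + L n * (γ n ^ 2 * ‖g n‖ ^ 2) + δ n := by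
          simp only [hF]; linarith
      _ = F n - γ n * (1 - γ n * L n) * ‖g n‖ ^ 2 + δ n := by ring
  -- Key frequently claim
  have key : ∀ ε : ℝ, 0 < ε → ∃ᶠ n in atTop, ‖g n‖ < ε := by
    intro ε hε
    by_contra hcon
    rw [Filter.not_frequently] at hcon
    have hev_g : ∀ᶠ n in atTop, ε ≤ ‖g n‖ := by
      filter_upwards [hcon] with n hn; exact not_lt.mp hn
    set κ : ℝ := (1 - c) * ε ^ 2 / 2 with hκ
    have hκpos : 0 < κ := by
      apply div_pos (mul_pos (by linarith) (pow_pos hε 2)) two_pos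
    have hev_δ : ∀ᶠ n in atTop, δ n / γ n < κ := by
      have := hratio1.eventually (gt_mem_nhds hκpos)
      exact this
    obtain ⟨N, hN⟩ := (hev_c.and (hev_g.and hev_δ)).exists_forall_of_atTop
    -- for n ≥ N : F (n+1) ≤ F n - κ * γ n
    have step : ∀ n, N ≤ n → F (n + 1) ≤ F n - κ * γ n := by
      intro n hn
      obtain ⟨h1, h2, h3⟩ := hN n hn
      have hδn : δ n ≤ κ * γ n := by
        have := (div_lt_iff₀ (hγ n)).mp h3
        linarith
      have hterm : (1 - c) * ε ^ 2 * γ n ≤ γ n * (1 - γ n * L n) * ‖g n‖ ^ 2 := by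
        have hε2 : ε ^ 2 ≤ ‖g n‖ ^ 2 := by
          apply pow_le_pow_left₀ (le_of_lt hε) h2
        have hcγ : 1 - c ≤ 1 - γ n * L n := by linarith
        have hγn := (hγ n).le
        have hA : (1 - c) * ε ^ 2 ≤ (1 - γ n * L n) * ‖g n‖ ^ 2 :=
          mul_le_mul hcγ hε2 (sq_nonneg ε) (by linarith)
        calc (1 - c) * ε ^ 2 * γ n ≤ (1 - γ n * L n) * ‖g n‖ ^ 2 * γ n :=
              mul_le_mul_of_nonneg_right hA hγn
          _ = γ n * (1 - γ n * L n) * ‖g n‖ ^ 2 := by ring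
      have := descent n
      have hhalf : κ * γ n ≤ (1 - c) * ε ^ 2 * γ n - κ * γ n := by
        have : (1 - c) * ε ^ 2 * γ n = 2 * (κ * γ n) := by rw [hκ]; ring
        linarith
      linarith
    -- sum up
    have sum_ineq : ∀ k : ℕ, F (N + k) ≤ F N - κ * ∑ i ∈ Finset.range k, γ (N + i) := by
      intro k
      induction k with
      | zero => simp
      | succ k ih =>
        have := step (N + k) (Nat.le_add_right N k)
        rw [Finset.sum_range_succ]
        have : F (N + (k + 1)) ≤ F (N + k) - κ * γ (N + k) := by
          rw [show N + (k + 1) = N + k + 1 from rfl]; exact this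
        linarith
    have hdiv' : Tendsto (fun k => κ * ∑ i ∈ Finset.range k, γ (N + i)) atTop atTop := by
      apply Tendsto.const_mul_atTop hκpos
      have heq : ∀ k, ∑ i ∈ Finset.range k, γ (N + i) =
          (∑ n ∈ Finset.range (N + k), γ n) - ∑ n ∈ Finset.range N, γ n := by
        intro k
        rw [Finset.sum_range_add]
        ring
      simp only [heq]
      apply tendsto_atTop_add_const_right
      exact hdiv.comp (Tendsto.nonneg_add_atTop (fun _ => Nat.zero_le N) tendsto_id)
    -- but F (N + k) ≥ m
    have hub : ∀ k, κ * ∑ i ∈ Finset.range k, γ (N + i) ≤ F N - m := by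
      intro k
      have := sum_ineq k
      have := hm (N + k) (θ (N + k))
      simp only [hF] at *
      linarith
    obtain ⟨k, hk⟩ := (hdiv'.eventually_gt_atTop (F N - m)).exists
    exact absurd (hub k) (not_le.mpr hk)
  -- conclude liminf = 0
  have hbdd : IsBoundedUnder (· ≥ ·) atTop (fun n => ‖g n‖) :=
    isBoundedUnder_of ⟨0, fun n => norm_nonneg _⟩
  have hliminf : Filter.liminf (fun n => ‖g n‖) atTop = 0 := by
    apply le_antisymm
    · by_contra h
      push_neg at h
      have h2 : 0 < Filter.liminf (fun n => ‖g n‖) atTop / 2 := by linarith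
      have := liminf_le_of_frequently_le
        ((key _ h2).mono fun n hn => le_of_lt hn) hbdd
      linarith
    · have hcob : IsCoboundedUnder (· ≥ ·) atTop (fun n => ‖g n‖) :=
        IsCoboundedUnder.of_frequently_le ((key 1 one_pos).mono fun n hn => le_of_lt hn)
      exact le_liminf_of_le hcob (Eventually.of_forall fun n => norm_nonneg _)
  refine ⟨hliminf, ?_⟩
  obtain ⟨φ, hφmono, hφ⟩ := extraction_forall_of_frequently
    (fun n => key (1 / (n + 1 : ℝ)) (by positivity))
  refine ⟨φ, hφmono, ?_⟩
  apply squeeze_zero (fun k => norm_nonneg _) (fun k => le_of_lt (hφ k))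
  exact tendsto_one_div_add_atTop_nhds_zero_nat
end
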